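/- Let L_0 be a hyperbolic difference operator whose Laplace invariants h_0 and k_0 are nowhere vanishing, let r ≥ 1, s ≥ 0, and suppose there exist functions A_0, …, A_s, B_0, …, B_r : ℤ × ℤ → ℂ with A_0, A_s, B_0, B_r nowhere vanishing such that: ψ : ℤ × ℤ → ℂ satisfies L_0ψ = 0 if and only if there exist N, M : ℤ → ℂ with ψ(n,m) = Σ_{i=0}^{s} A_i(n,m)N(n+i) + Σ_{j=0}^{r} B_j(n,m)M(m+j). Let L_1 be a Laplace transform of L_0. Then there exist functions Â_0, …, Â_{s+1}, B̂_0, …, B̂_{r−1} : ℤ × ℤ → ℂ with Â_0, Â_{s+1}, B̂_0, B̂_{r−1} nowhere vanishing such that: ψ satisfies L_1ψ = 0 if and only if there exist N, M : ℤ → ℂ with ψ(n,m) = Σ_{i=0}^{s+1} Â_i(n,m)N(n+i) + Σ_{j=0}^{r−1} B̂_j(n,m)M(m+j). -/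

import Mathlib

noncomputable section

/-- The hyperbolic difference operator with coefficients `a`, `b`, `c`:
`(Lψ)(n,m) = ψ(n+1,m+1) + a(n,m)ψ(n+1,m) + b(n,m)ψ(n,m+1) + c(n,m)ψ(n,m)`. -/
def Lop (a b c : ℤ → ℤ → ℂ) (ψ : ℤ → ℤ → ℂ) : ℤ → ℤ → ℂ :=
  fun n m => ψ (n + 1) (m + 1) + a n m * ψ (n + 1) m + b n m * ψ n (m + 1) + c n m * ψ n m

/-- The Laplace invariant `k(n,m) = c(n,m)/(a(n-1,m)b(n,m)) - 1`. -/
def kInv (a b c : ℤ → ℤ → ℂ) : ℤ → ℤ → ℂ :=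
  fun n m => c n m / (a (n - 1) m * b n m) - 1

/-- The Laplace invariant `h(n,m) = c(n,m)/(a(n,m)b(n,m-1)) - 1`. -/
def hInv (a b c : ℤ → ℤ → ℂ) : ℤ → ℤ → ℂ :=
  fun n m => c n m / (a n m * b n (m - 1)) - 1

/-- The operator `(Dψ)(n,m) = ψ(n+1,m) + b(n,m-1)ψ(n,m)`. -/
def Dop (b : ℤ → ℤ → ℂ) (ψ : ℤ → ℤ → ℂ) : ℤ → ℤ → ℂ :=
  fun n m => ψ (n + 1) m + b n (m - 1) * ψ n m

/-- `L̂` (coefficients `a' b' c'`) is a Laplace transform of `L` (coefficients `a b c`). -/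
def IsLaplaceTransform (a' b' c' a b c : ℤ → ℤ → ℂ) : Prop :=
  ∃ q : ℤ → ℤ → ℂ, ∀ ψ : ℤ → ℤ → ℂ, ∀ n m : ℤ,
    Lop a' b' c' (Dop b ψ) n m = Lop a b c ψ (n + 1) m + q n m * Lop a b c ψ n m

/-!
`Dop b` maps the kernel of `L` onto the kernel of its Laplace transform `L₁`. One inclusion is the
defining identity `L₁ (D χ) = T_n (L χ) + q · L χ`. Conversely, `D χ = φ` can be solved column by
column, with the column `χ 0` free. Since `L = (T_m + a) D + (c - a b(·, m-1))` and
`c - a b(·, m-1) = a b(·, m-1) h ≠ 0`, that column can be chosen so that `L χ = 0` on it, and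
`L₁ φ = 0` then propagates `L χ = 0` to every column, because `q = b₁` never vanishes.

Applying `D` to the general solution of `L` turns `∑ A_i N(n+i)` into a sum of `s + 2` terms and
`∑ B_j M(m+j)` into `∑ (D B_j) M(m+j)`, whose top term vanishes: substituting an indicator
function for `M` into `L ψ = 0` gives `D B_r = 0`, and expresses `D B_0` and `D B_{r-1}` as
nonzero multiples of `B_0` and `B_r`.
-/

open Finset

lemma exists_int_seq_succ_eq {α : Type*} (f : ℤ → α → α) (hf : ∀ n, Function.Surjective (f n))
    (x₀ : α) : ∃ x : ℤ → α, x 0 = x₀ ∧ ∀ n, x (n + 1) = f n (x n) := by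
  choose g hg using hf
  let up : ℕ → α := fun k => Nat.rec x₀ (fun k y => f k y) k
  let down : ℕ → α := fun k => Nat.rec x₀ (fun k y => g (Int.negSucc k) y) k
  refine ⟨fun | .ofNat k => up k | .negSucc k => down (k + 1), rfl, ?_⟩
  rintro (k | _ | k)
  · rfl
  · exact (hg _ _).symm
  · exact (hg _ _).symm

lemma exists_dop_eq {b : ℤ → ℤ → ℂ} (hb : ∀ n m, b n m ≠ 0) (φ : ℤ → ℤ → ℂ) (g : ℤ → ℂ) :
    ∃ χ : ℤ → ℤ → ℂ, χ 0 = g ∧ Dop b χ = φ := by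
  obtain ⟨χ, hχ0, hχ⟩ := exists_int_seq_succ_eq (fun n y m => φ n m - b n (m - 1) * y m)
    (fun n z => ⟨fun m => (φ n m - z m) / b n (m - 1), funext fun m => by
      field_simp [hb n (m - 1)]; ring⟩) g
  exact ⟨χ, hχ0, funext₂ fun n m => by simp [Dop, hχ]⟩

lemma lop_eq_dop_add (a b c χ : ℤ → ℤ → ℂ) (n m : ℤ) :
    Lop a b c χ n m = Dop b χ n (m + 1) + a n m * Dop b χ n m
      + (c n m - a n m * b n (m - 1)) * χ n m := by
  simp only [Lop, Dop, add_sub_cancel_right]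
  ring

lemma sub_mul_ne_zero_of_hInv_ne_zero {a b c : ℤ → ℤ → ℂ} {n m : ℤ} (ha : a n m ≠ 0)
    (hb : b n (m - 1) ≠ 0) (hh : hInv a b c n m ≠ 0) : c n m - a n m * b n (m - 1) ≠ 0 := by
  intro h
  apply hh
  rw [hInv, sub_eq_zero.1 h, div_self (mul_ne_zero ha hb), sub_self]

def IsLaplaceMultiplier (a' b' c' a b c q : ℤ → ℤ → ℂ) : Prop :=
  ∀ ψ : ℤ → ℤ → ℂ, ∀ n m : ℤ,
    Lop a' b' c' (Dop b ψ) n m = Lop a b c ψ (n + 1) m + q n m * Lop a b c ψ n m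

namespace IsLaplaceMultiplier

variable {a b c a₁ b₁ c₁ q : ℤ → ℤ → ℂ}

-- The test function vanishes on the columns `n + 1`, `n + 2`, so only the column `n` of its image
-- under `Dop b` contributes.
lemma eq_coeff {n m : ℤ} (hq : IsLaplaceMultiplier a₁ b₁ c₁ a b c q) (hb : b n m ≠ 0) :
    q n m = b₁ n m := by
  have h := hq (fun x y => (x - n - 1) * (x - n - 2) * (y - m)) n m
  simp only [Lop, Dop, add_sub_cancel_right] at h
  push_cast at h
  have h2 : (b₁ n m - q n m) * (2 * b n m) = 0 := by linear_combination h
  exact (sub_eq_zero.1 ((mul_eq_zero.1 h2).resolve_right (mul_ne_zero two_ne_zero hb))).symm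

lemma lop_eq_zero (hq : IsLaplaceMultiplier a₁ b₁ c₁ a b c q) (hq0 : ∀ n m, q n m ≠ 0)
    {χ : ℤ → ℤ → ℂ} (hχ : ∀ n m, Lop a₁ b₁ c₁ (Dop b χ) n m = 0)
    (h0 : ∀ m, Lop a b c χ 0 m = 0) (n m : ℤ) : Lop a b c χ n m = 0 := by
  have step : ∀ n, Lop a b c χ (n + 1) m = -(q n m * Lop a b c χ n m) := fun n => by
    linear_combination -(hq χ n m) + hχ n m
  induction n using Int.induction_on with
  | zero => exact h0 m
  | succ k ih => rw [step, ih, mul_zero, neg_zero]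
  | pred k ih =>
    have h := step (-(k : ℤ) - 1)
    rw [sub_add_cancel, ih, eq_comm, neg_eq_zero] at h
    exact (mul_eq_zero.1 h).resolve_left (hq0 _ m)

end IsLaplaceMultiplier

theorem IsLaplaceTransform.lop_eq_zero_iff {a b c a₁ b₁ c₁ : ℤ → ℤ → ℂ}
    (hLT : IsLaplaceTransform a₁ b₁ c₁ a b c) (ha : ∀ n m, a n m ≠ 0) (hb : ∀ n m, b n m ≠ 0)
    (hb₁ : ∀ n m, b₁ n m ≠ 0) (hh : ∀ n m, hInv a b c n m ≠ 0) (φ : ℤ → ℤ → ℂ) :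
    (∀ n m, Lop a₁ b₁ c₁ φ n m = 0) ↔
      ∃ χ, (∀ n m, Lop a b c χ n m = 0) ∧ Dop b χ = φ := by
  obtain ⟨q, hq⟩ : ∃ q, IsLaplaceMultiplier a₁ b₁ c₁ a b c q := hLT
  refine ⟨fun hφ => ?_, ?_⟩
  · have hden m := sub_mul_ne_zero_of_hInv_ne_zero (ha 0 m) (hb 0 (m - 1)) (hh 0 m)
    obtain ⟨χ, hχ0, rfl⟩ := exists_dop_eq hb φ
      fun m => -(φ 0 (m + 1) + a 0 m * φ 0 m) / (c 0 m - a 0 m * b 0 (m - 1))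
    have hq0 n m : q n m ≠ 0 := hq.eq_coeff (hb n m) ▸ hb₁ n m
    refine ⟨χ, hq.lop_eq_zero hq0 hφ fun m => ?_, rfl⟩
    rw [lop_eq_dop_add, hχ0]
    field_simp [hden m]
    ring
  · rintro ⟨χ, hχ, rfl⟩ n m
    rw [hq, hχ, hχ, mul_zero, add_zero]

def pulse (B : ℕ → ℤ → ℤ → ℂ) (r : ℕ) (m₀ n m : ℤ) : ℂ :=
  ∑ j ∈ range (r + 1), B j n m * if m + j = m₀ then 1 else 0

section Pulse
variable {a b c : ℤ → ℤ → ℂ} {B : ℕ → ℤ → ℤ → ℂ} {r : ℕ}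

lemma pulse_of_add_eq {m₀ m : ℤ} (n : ℤ) {k : ℕ} (hk : m + k = m₀) :
    pulse B r m₀ n m = if k ≤ r then B k n m else 0 := by
  subst hk
  simp [pulse, mul_ite]

lemma pulse_of_lt {m₀ m : ℤ} (n : ℤ) (h : m₀ < m) : pulse B r m₀ n m = 0 :=
  sum_eq_zero fun j _ => by rw [if_neg (by omega), mul_zero]

lemma dop_last_eq_zero (hB : ∀ m₀ n m, Lop a b c (pulse B r m₀) n m = 0) :
    Dop b (B r) = 0 := by
  funext n m
  have h := hB (m + r) n (m - 1)
  simp only [Lop, sub_add_cancel] at h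
  rw [pulse_of_add_eq (n + 1) (k := r) (by ring), pulse_of_add_eq n (k := r) (by ring),
    pulse_of_add_eq (n + 1) (k := r + 1) (by push_cast; ring),
    pulse_of_add_eq n (k := r + 1) (by push_cast; ring)] at h
  simpa [Dop] using h

lemma mul_dop_first_eq (hB : ∀ m₀ n m, Lop a b c (pulse B r m₀) n m = 0) (n m : ℤ) :
    a n m * Dop b (B 0) n m = -(c n m - a n m * b n (m - 1)) * B 0 n m := by
  have h := hB m n m
  simp only [Lop] at h
  rw [pulse_of_lt (n + 1) (by omega), pulse_of_add_eq (n + 1) (k := 0) (by simp),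
    pulse_of_lt n (by omega), pulse_of_add_eq n (k := 0) (by simp)] at h
  simp only [Dop]
  linear_combination (by simpa using h : a n m * B 0 (n + 1) m + c n m * B 0 n m = 0)

lemma dop_pred_last_eq (hB : ∀ m₀ n m, Lop a b c (pulse B r m₀) n m = 0) (hr : 1 ≤ r)
    (n m : ℤ) : Dop b (B (r - 1)) n (m + 1) = -(c n m - a n m * b n (m - 1)) * B r n m := by
  have h := hB (m + r) n m
  simp only [Lop] at h
  rw [pulse_of_add_eq (n + 1) (k := r - 1) (by push_cast [hr]; ring),
    pulse_of_add_eq (n + 1) (k := r) rfl, pulse_of_add_eq n (k := r) rfl,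
    pulse_of_add_eq n (k := r - 1) (by push_cast [hr]; ring)] at h
  have hlast := congrFun₂ (dop_last_eq_zero hB) n m
  simp only [Dop, add_sub_cancel_right, Pi.zero_apply] at hlast ⊢
  simp only [le_refl, tsub_le_iff_right, le_add_iff_nonneg_right, zero_le, if_true] at h
  linear_combination h - a n m * hlast

end Pulse

def finiteForm (A B : ℕ → ℤ → ℤ → ℂ) (k l : ℕ) (N M : ℤ → ℂ) (n m : ℤ) : ℂ :=
  ∑ i ∈ range k, A i n m * N (n + i) + ∑ j ∈ range l, B j n m * M (m + j)

def dopCoeff (s : ℕ) (b : ℤ → ℤ → ℂ) (A : ℕ → ℤ → ℤ → ℂ) (i : ℕ) (n m : ℤ) : ℂ :=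
  (if i ≤ s then b n (m - 1) * A i n m else 0) + if i = 0 then 0 else A (i - 1) (n + 1) m

lemma sum_dopCoeff_mul (s : ℕ) (b : ℤ → ℤ → ℂ) (A : ℕ → ℤ → ℤ → ℂ) (N : ℤ → ℂ) (n m : ℤ) :
    ∑ i ∈ range (s + 2), dopCoeff s b A i n m * N (n + i)
      = ∑ i ∈ range (s + 1), A i (n + 1) m * N (n + 1 + i)
        + b n (m - 1) * ∑ i ∈ range (s + 1), A i n m * N (n + i) := by
  simp only [dopCoeff, add_mul, sum_add_distrib, mul_sum]
  rw [add_comm, sum_range_succ', sum_range_succ _ (s + 1)]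
  simp only [if_neg (Nat.succ_ne_zero _), if_pos, if_neg (by omega : ¬s + 1 ≤ s),
    Nat.add_sub_cancel, zero_mul, add_zero]
  congr 1
  · exact sum_congr rfl fun i _ => by rw [Nat.cast_succ, add_comm (i : ℤ), add_assoc]
  · exact sum_congr rfl fun i hi => by rw [if_pos (Nat.lt_succ_iff.1 (mem_range.1 hi)), mul_assoc]

lemma sum_dop_mul (b : ℤ → ℤ → ℂ) (B : ℕ → ℤ → ℤ → ℂ) (l : ℕ) (M : ℤ → ℂ) (n m : ℤ) :
    ∑ j ∈ range l, Dop b (B j) n m * M (m + j)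
      = ∑ j ∈ range l, B j (n + 1) m * M (m + j)
        + b n (m - 1) * ∑ j ∈ range l, B j n m * M (m + j) := by
  rw [mul_sum, ← sum_add_distrib]
  exact sum_congr rfl fun j _ => by simp only [Dop]; ring

lemma dop_finiteForm {s r : ℕ} {b : ℤ → ℤ → ℂ} {A B : ℕ → ℤ → ℤ → ℂ} (hB : Dop b (B r) = 0)
    (N M : ℤ → ℂ) :
    Dop b (finiteForm A B (s + 1) (r + 1) N M)
      = finiteForm (dopCoeff s b A) (fun j => Dop b (B j)) (s + 2) r N M := by
  funext n m
  have hsum := sum_dop_mul b B (r + 1) M n m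
  rw [sum_range_succ (fun j => Dop b (B j) n m * M (m + j)) r, hB, Pi.zero_apply,
    Pi.zero_apply, zero_mul, add_zero] at hsum
  rw [Dop]
  simp only [finiteForm]
  rw [sum_dopCoeff_mul, hsum]
  ring

theorem stmt7_general (a b c a₁ b₁ c₁ : ℤ → ℤ → ℂ)
    (ha : ∀ n m, a n m ≠ 0) (hb : ∀ n m, b n m ≠ 0)
    (hb₁ : ∀ n m, b₁ n m ≠ 0)
    (hh : ∀ n m, hInv a b c n m ≠ 0)
    (r s : ℕ) (hr : 1 ≤ r)
    (A B : ℕ → ℤ → ℤ → ℂ)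
    (hA0 : ∀ n m, A 0 n m ≠ 0) (hAs : ∀ n m, A s n m ≠ 0)
    (hB0 : ∀ n m, B 0 n m ≠ 0) (hBr : ∀ n m, B r n m ≠ 0)
    (hgen : ∀ ψ : ℤ → ℤ → ℂ,
      (∀ n m, Lop a b c ψ n m = 0) ↔
        ∃ N M : ℤ → ℂ, ∀ n m : ℤ,
          ψ n m = ∑ i ∈ Finset.range (s + 1), A i n m * N (n + (i : ℤ))
            + ∑ j ∈ Finset.range (r + 1), B j n m * M (m + (j : ℤ)))
    (hLT : IsLaplaceTransform a₁ b₁ c₁ a b c) :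
    ∃ A' B' : ℕ → ℤ → ℤ → ℂ,
      (∀ n m, A' 0 n m ≠ 0) ∧ (∀ n m, A' (s + 1) n m ≠ 0) ∧
      (∀ n m, B' 0 n m ≠ 0) ∧ (∀ n m, B' (r - 1) n m ≠ 0) ∧
      ∀ ψ : ℤ → ℤ → ℂ,
        (∀ n m, Lop a₁ b₁ c₁ ψ n m = 0) ↔
          ∃ N M : ℤ → ℂ, ∀ n m : ℤ,
            ψ n m = ∑ i ∈ Finset.range (s + 2), A' i n m * N (n + (i : ℤ))
              + ∑ j ∈ Finset.range r, B' j n m * M (m + (j : ℤ)) := by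
  have hden n m : c n m - a n m * b n (m - 1) ≠ 0 :=
    sub_mul_ne_zero_of_hInv_ne_zero (ha n m) (hb n (m - 1)) (hh n m)
  have hpulse m₀ n m : Lop a b c (pulse B r m₀) n m = 0 :=
    (hgen _).2 ⟨0, fun t => if t = m₀ then 1 else 0, fun n m => by simp [pulse]⟩ n m
  have hdop := dop_finiteForm (s := s) (A := A) (dop_last_eq_zero hpulse)
  refine ⟨dopCoeff s b A, fun j => Dop b (B j), fun n m => ?_, fun n m => ?_, fun n m => ?_,
    fun n m => ?_, fun ψ => ?_⟩
  · simpa [dopCoeff] using mul_ne_zero (hb n (m - 1)) (hA0 n m)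
  · simpa [dopCoeff] using hAs (n + 1) m
  · refine right_ne_zero_of_mul (a := a n m) ?_
    rw [mul_dop_first_eq hpulse]
    exact mul_ne_zero (neg_ne_zero.2 (hden n m)) (hB0 n m)
  · show Dop b (B (r - 1)) n m ≠ 0
    rw [← sub_add_cancel m 1, dop_pred_last_eq hpulse hr]
    exact mul_ne_zero (neg_ne_zero.2 (hden n _)) (hBr n _)
  rw [hLT.lop_eq_zero_iff ha hb hb₁ hh]
  constructor
  · rintro ⟨χ, hχ, rfl⟩
    obtain ⟨N, M, hNM⟩ := (hgen χ).1 hχ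
    obtain rfl : χ = finiteForm A B (s + 1) (r + 1) N M := funext₂ hNM
    exact ⟨N, M, fun n m => congrFun₂ (hdop N M) n m⟩
  · rintro ⟨N, M, hNM⟩
    exact ⟨_, (hgen _).2 ⟨N, M, fun _ _ => rfl⟩, (hdop N M).trans (funext₂ hNM).symm⟩

/-- Lemma 3: if the general solution of `L_0ψ = 0` has the stated finite
form with orders `s` and `r ≥ 1`, and `L_1` is a Laplace transform of `L_0` (whose
invariants are nowhere vanishing), then the general solution of `L_1ψ = 0` has the
analogous form with orders `s+1` and `r-1`, with nonvanishing extreme coefficients. -/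
theorem stmt7 (a b c a₁ b₁ c₁ : ℤ → ℤ → ℂ)
    (ha : ∀ n m, a n m ≠ 0) (hb : ∀ n m, b n m ≠ 0)
    (ha₁ : ∀ n m, a₁ n m ≠ 0) (hb₁ : ∀ n m, b₁ n m ≠ 0)
    (hh : ∀ n m, hInv a b c n m ≠ 0) (hk : ∀ n m, kInv a b c n m ≠ 0)
    (r s : ℕ) (hr : 1 ≤ r)
    (A B : ℕ → ℤ → ℤ → ℂ)
    (hA0 : ∀ n m, A 0 n m ≠ 0) (hAs : ∀ n m, A s n m ≠ 0)
    (hB0 : ∀ n m, B 0 n m ≠ 0) (hBr : ∀ n m, B r n m ≠ 0)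
    (hgen : ∀ ψ : ℤ → ℤ → ℂ,
      (∀ n m, Lop a b c ψ n m = 0) ↔
        ∃ N M : ℤ → ℂ, ∀ n m : ℤ,
          ψ n m = ∑ i ∈ Finset.range (s + 1), A i n m * N (n + (i : ℤ))
            + ∑ j ∈ Finset.range (r + 1), B j n m * M (m + (j : ℤ)))
    (hLT : IsLaplaceTransform a₁ b₁ c₁ a b c) :
    ∃ A' B' : ℕ → ℤ → ℤ → ℂ,
      (∀ n m, A' 0 n m ≠ 0) ∧ (∀ n m, A' (s + 1) n m ≠ 0) ∧
      (∀ n m, B' 0 n m ≠ 0) ∧ (∀ n m, B' (r - 1) n m ≠ 0) ∧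
      ∀ ψ : ℤ → ℤ → ℂ,
        (∀ n m, Lop a₁ b₁ c₁ ψ n m = 0) ↔
          ∃ N M : ℤ → ℂ, ∀ n m : ℤ,
            ψ n m = ∑ i ∈ Finset.range (s + 2), A' i n m * N (n + (i : ℤ))
              + ∑ j ∈ Finset.range r, B' j n m * M (m + (j : ℤ)) :=
  stmt7_general a b c a₁ b₁ c₁ ha hb hb₁ hh r s hr A B hA0 hAs hB0 hBr hgen hLT
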